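/- arXiv:1705.04573 — 4 statements merged into one kernel-verified Lean document; each statement's English description precedes it below -/
import Mathlib

section
/- Let A be a set with two associative binary operations · and ⋆ satisfying the interchange law (a·b)⋆(c·d) = (a⋆c)·(b⋆d). Then for all a1,...,a9 ∈ A: (a1⋆a2)·(a3⋆a4⋆a5⋆a6)·(a7⋆a8⋆a9) = (a1⋆a2)·(a3⋆a5⋆a4⋆a6)·(a7⋆a8⋆a9). -/
/-!
Expanding by the interchange law, `(p ⋆ q)·(b ⋆ x ⋆ c)·(u ⋆ v ⋆ w)` and
`(p ⋆ q)·(b ⋆ c)·(u ⋆ (x·v) ⋆ w)` both become `(p ⋆ (q·c))·((b·u) ⋆ (x·v) ⋆ w)`: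
a factor `x` of the middle ⋆-word can be moved into the right-hand word, whatever its
neighbours `b` and `c` are. Moving `a4` out of `a3 ⋆ a4 ⋆ (a5 ⋆ a6)` and out of
`(a3 ⋆ a5) ⋆ a4 ⋆ a6` therefore gives the same element.
-/

section Interchange

variable {A : Type*} {m s : A → A → A}

theorem interchange_three (hm : ∀ a b c, m (m a b) c = m a (m b c))
    (hint : ∀ a b c d, s (m a b) (m c d) = m (s a c) (s b d)) (x y u v w z : A) :
    m (m (s x y) (s u v)) (s w z) = s (m x (m u w)) (m y (m v z)) := by
  rw [← hint, ← hint, hm, hm]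

theorem move_middle_factor (hm : ∀ a b c, m (m a b) c = m a (m b c))
    (hs : ∀ a b c, s (s a b) c = s a (s b c))
    (hint : ∀ a b c d, s (m a b) (m c d) = m (s a c) (s b d)) (p q b x c u v w : A) :
    m (m (s p q) (s (s b x) c)) (s (s u v) w) = m (m (s p q) (s b c)) (s u (s (m x v) w)) := by
  have lhs : m (m (s p q) (s (s b x) c)) (s (s u v) w) =
      m (s p (m q c)) (s (s (m b u) (m x v)) w) := by
    rw [interchange_three hm hint, ← hint b u x v, ← hint p, hm q]
  have rhs : m (m (s p q) (s b c)) (s u (s (m x v) w)) =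
      m (s p (m q c)) (s (m b u) (s (m x v) w)) := by
    rw [interchange_three hm hint, ← hint p, hm q]
  rw [lhs, rhs, hs]

end Interchange

/-- Bremner–Madariaga arity-9 hidden commutativity in `Ass ⊗ Ass`. -/
theorem stmt6 {A : Type*} (m s : A → A → A)
    (hm : ∀ a b c, m (m a b) c = m a (m b c))
    (hs : ∀ a b c, s (s a b) c = s a (s b c))
    (hint : ∀ a b c d, s (m a b) (m c d) = m (s a c) (s b d)) :
    ∀ a1 a2 a3 a4 a5 a6 a7 a8 a9 : A,
      m (m (s a1 a2) (s (s (s a3 a4) a5) a6)) (s (s a7 a8) a9) =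
      m (m (s a1 a2) (s (s (s a3 a5) a4) a6)) (s (s a7 a8) a9) := by
  intro a1 a2 a3 a4 a5 a6 a7 a8 a9
  rw [hs (s a3 a4) a5 a6, move_middle_factor hm hs hint a1 a2 a3 a4 (s a5 a6),
    move_middle_factor hm hs hint a1 a2 (s a3 a5) a4 a6, hs a3 a5 a6]
end

section
/- Let A be a set with two associative binary operations · and ⋆ satisfying the interchange law (a·b)⋆(c·d) = (a⋆c)·(b⋆d). Then for all a1,...,a16 ∈ A: (a1⋆a2⋆a3⋆a4)·(a5⋆a6⋆a7⋆a8)·(a9⋆a10⋆a11⋆a12)·(a13⋆a14⋆a15⋆a16) = (a1⋆a2⋆a3⋆a4)·(a5⋆a7⋆a6⋆a8)·(a9⋆a10⋆a11⋆a12)·(a13⋆a14⋆a15⋆a16). -/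
/-!
Interchanging and reassociating back and forth moves an inner letter `c` of the
middle `⋆`-word of a threefold `⬝`-product into the next `⋆`-word, where it is absorbed as `c ⬝ e`:
`(x ⋆ a) ⬝ (b ⋆ c ⋆ d) ⬝ (y ⋆ e ⋆ f) = (x ⋆ a) ⬝ (b ⋆ d) ⬝ (y ⋆ (c ⬝ e ⋆ f))`.
Moving `a6` out of `a5 ⋆ a6 ⋆ (a7 ⋆ a8)` and out of `(a5 ⋆ a7) ⋆ a6 ⋆ a8` turns both sides of the
theorem into the same expression.
-/

section Interchange

variable {A : Type*} (m s : A → A → A)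

local infixl:70 " ⬝ " => m
local infixl:65 " ⋆ " => s

theorem interchange_slide (hm : ∀ a b c, a ⬝ b ⬝ c = a ⬝ (b ⬝ c))
    (hs : ∀ a b c, a ⋆ b ⋆ c = a ⋆ (b ⋆ c))
    (hint : ∀ a b c d, (a ⬝ b) ⋆ (c ⬝ d) = (a ⋆ c) ⬝ (b ⋆ d)) (x a b c d y e f : A) :
    (x ⋆ a) ⬝ (b ⋆ c ⋆ d) ⬝ (y ⋆ e ⋆ f) = (x ⋆ a) ⬝ (b ⋆ d) ⬝ (y ⋆ (c ⬝ e ⋆ f)) :=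
  calc (x ⋆ a) ⬝ (b ⋆ c ⋆ d) ⬝ (y ⋆ e ⋆ f)
      = (x ⬝ (b ⋆ c) ⋆ a ⬝ d) ⬝ (y ⋆ e ⋆ f) := by rw [hint x]
    _ = x ⬝ (b ⋆ c) ⬝ (y ⋆ e) ⋆ a ⬝ d ⬝ f := by rw [hint (x ⬝ (b ⋆ c))]
    _ = (x ⋆ a ⬝ d) ⬝ ((b ⋆ c) ⬝ (y ⋆ e) ⋆ f) := by rw [hm x, hint x]
    _ = (x ⋆ a ⬝ d) ⬝ (b ⬝ y ⋆ (c ⬝ e ⋆ f)) := by rw [← hint b, hs]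
    _ = x ⬝ (b ⬝ y) ⋆ a ⬝ d ⬝ (c ⬝ e ⋆ f) := by rw [hint x]
    _ = (x ⋆ a) ⬝ (b ⋆ d) ⬝ (y ⋆ (c ⬝ e ⋆ f)) := by rw [← hm x, hint (x ⬝ b), hint x]

end Interchange

/-- Kock's arity-16 hidden commutativity in `Ass ⊗ Ass`. -/
theorem stmt7 {A : Type*} (m s : A → A → A)
    (hm : ∀ a b c, m (m a b) c = m a (m b c))
    (hs : ∀ a b c, s (s a b) c = s a (s b c))
    (hint : ∀ a b c d, s (m a b) (m c d) = m (s a c) (s b d)) :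
    ∀ a1 a2 a3 a4 a5 a6 a7 a8 a9 a10 a11 a12 a13 a14 a15 a16 : A,
      m (m (m (s (s (s a1 a2) a3) a4) (s (s (s a5 a6) a7) a8))
          (s (s (s a9 a10) a11) a12)) (s (s (s a13 a14) a15) a16) =
      m (m (m (s (s (s a1 a2) a3) a4) (s (s (s a5 a7) a6) a8))
          (s (s (s a9 a10) a11) a12)) (s (s (s a13 a14) a15) a16) := by
  intro a1 a2 a3 a4 a5 a6 a7 a8 a9 a10 a11 a12 a13 a14 a15 a16
  have slide := interchange_slide m s hm hs hint (s (s a1 a2) a3) a4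
  rw [hs (s a5 a6) a7 a8, slide a5 a6 (s a7 a8), slide (s a5 a7) a6 a8, hs a5 a7 a8]
end

section
/- Define the set S_n of '2-dimensional association types' of arity n inductively: the trivial type has arity 1; given k ≥ 2 types of arities n_1,...,n_k with n = n_1+...+n_k, a horizontal composite and a vertical composite each give a type of arity n, subject to the identification that a horizontal composite of two vertical composites of pairs equals the corresponding vertical composite of two horizontal composites (interchange). Then |S_1| = 1, |S_2| = 2, |S_3| = 8 and |S_4| = 39 when composites are restricted to be binary. -/
/-- Binary 2-dimensional association types: the trivial type, horizontal
composites and vertical composites. -/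
inductive AssocType2 : Type
  | leaf : AssocType2
  | h : AssocType2 → AssocType2 → AssocType2
  | v : AssocType2 → AssocType2 → AssocType2

/-- The arity (number of leaves) of a 2-dimensional association type. -/
def AssocType2.arity : AssocType2 → ℕ
  | .leaf => 1
  | .h a b => a.arity + b.arity
  | .v a b => a.arity + b.arity

/-- The interchange identification, closed under congruence: a horizontal
composite of two vertical composites equals the corresponding vertical composite
of two horizontal composites. -/
inductive AssocType2.Rel : AssocType2 → AssocType2 → Prop
  | interchange (a b c d : AssocType2) :
      AssocType2.Rel (.h (.v a b) (.v c d)) (.v (.h a c) (.h b d))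
  | congr_h_left {a a' : AssocType2} (b : AssocType2) :
      AssocType2.Rel a a' → AssocType2.Rel (.h a b) (.h a' b)
  | congr_h_right (a : AssocType2) {b b' : AssocType2} :
      AssocType2.Rel b b' → AssocType2.Rel (.h a b) (.h a b')
  | congr_v_left {a a' : AssocType2} (b : AssocType2) :
      AssocType2.Rel a a' → AssocType2.Rel (.v a b) (.v a' b)
  | congr_v_right (a : AssocType2) {b b' : AssocType2} :
      AssocType2.Rel b b' → AssocType2.Rel (.v a b) (.v a b')

/-- `S n`: 2-dimensional association types of arity `n`, modulo interchange. -/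
def S (n : ℕ) : Type :=
  {q : Quot AssocType2.Rel // ∃ t : AssocType2, t.arity = n ∧ Quot.mk _ t = q}


/-!
Orient the interchange law as the rewrite rule `h (v a b) (v c d) ↦ v (h a c) (h b d)`.
Computing normal forms bottom-up, `normalize` sends every type to a term of its class and is
constant on classes, so it is a complete invariant of `Quot AssocType2.Rel`. Hence `S n` is in
bijection with the normal forms of the types of arity `n`, which are counted by enumeration.
-/

deriving instance DecidableEq for AssocType2

namespace AssocType2

def hQ : Quot Rel → Quot Rel → Quot Rel :=
  Quot.map₂ h (fun a _ _ => .congr_h_right a) (fun _ _ b => .congr_h_left b)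

def vQ : Quot Rel → Quot Rel → Quot Rel :=
  Quot.map₂ v (fun a _ _ => .congr_v_right a) (fun _ _ b => .congr_v_left b)

/-- Horizontal composite of two normal forms, normalised by interchanging recursively. -/
def normH : AssocType2 → AssocType2 → AssocType2
  | .v a₁ a₂, .v b₁ b₂ => .v (normH a₁ b₁) (normH a₂ b₂)
  | a, b => .h a b

def normalize : AssocType2 → AssocType2
  | .leaf => .leaf
  | .h a b => normH (normalize a) (normalize b)
  | .v a b => .v (normalize a) (normalize b)

theorem mk_normH : ∀ a b : AssocType2,
    Quot.mk Rel (normH a b) = hQ (Quot.mk Rel a) (Quot.mk Rel b)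
  | .leaf, _ | .h _ _, _ | .v _ _, .leaf | .v _ _, .h _ _ => rfl
  | .v a₁ a₂, .v b₁ b₂ => by
      change vQ (Quot.mk Rel (normH a₁ b₁)) (Quot.mk Rel (normH a₂ b₂)) = _
      rw [mk_normH a₁ b₁, mk_normH a₂ b₂]
      exact (Quot.sound (.interchange a₁ a₂ b₁ b₂)).symm

theorem mk_normalize : ∀ t : AssocType2, Quot.mk Rel (normalize t) = Quot.mk Rel t
  | .leaf => rfl
  | .h a b => by
      change Quot.mk Rel (normH (normalize a) (normalize b)) = hQ (Quot.mk Rel a) (Quot.mk Rel b)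
      rw [mk_normH, mk_normalize a, mk_normalize b]
  | .v a b => by
      change vQ (Quot.mk Rel (normalize a)) (Quot.mk Rel (normalize b)) =
        vQ (Quot.mk Rel a) (Quot.mk Rel b)
      rw [mk_normalize a, mk_normalize b]

theorem normalize_eq_of_rel {a b : AssocType2} (r : Rel a b) : normalize a = normalize b := by
  induction r with
  | interchange => simp [normalize, normH]
  | congr_h_left _ _ ih | congr_h_right _ _ ih | congr_v_left _ _ ih | congr_v_right _ _ ih =>
      simp [normalize, ih]

def normalizeQ : Quot Rel → AssocType2 :=
  Quot.lift normalize fun _ _ => normalize_eq_of_rel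

theorem normalizeQ_injective : Function.Injective normalizeQ := by
  rintro ⟨a⟩ ⟨b⟩ hab
  rw [← mk_normalize a, ← mk_normalize b]
  exact congrArg (Quot.mk Rel) hab

theorem one_le_arity : ∀ t : AssocType2, 1 ≤ t.arity
  | .leaf => le_rfl
  | .h a _ | .v a _ => (one_le_arity a).trans (Nat.le_add_right _ _)

def treesOfHeightLT : ℕ → List AssocType2
  | 0 => []
  | n + 1 => .leaf :: (treesOfHeightLT n).flatMap fun a =>
      (treesOfHeightLT n).flatMap fun b => [.h a b, .v a b]

theorem mem_treesOfHeightLT_of_arity_le (t : AssocType2) :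
    ∀ n, t.arity ≤ n → t ∈ treesOfHeightLT n := by
  induction t with
  | leaf =>
      rintro (_ | n) hn
      · exact absurd ((one_le_arity _).trans hn) (by norm_num)
      · simp [treesOfHeightLT]
  | h a b iha ihb | v a b iha ihb =>
      rintro (_ | n) hn
      · exact absurd ((one_le_arity _).trans hn) (by norm_num)
      have ha := iha n (by have := one_le_arity b; simp only [arity] at hn; omega)
      have hb := ihb n (by have := one_le_arity a; simp only [arity] at hn; omega)
      simp only [treesOfHeightLT, List.mem_cons, List.mem_flatMap]
      exact .inr ⟨a, ha, b, hb, by simp⟩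

def normalForms (n : ℕ) : Finset AssocType2 :=
  (((treesOfHeightLT n).filter (·.arity = n)).map normalize).toFinset

theorem normalizeQ_image_S (n : ℕ) :
    normalizeQ '' {q | ∃ t : AssocType2, t.arity = n ∧ Quot.mk _ t = q} = normalForms n := by
  ext u
  simp only [Set.mem_image, Set.mem_ofPred_eq, normalForms, Finset.mem_coe, List.mem_toFinset,
    List.mem_map, List.mem_filter, decide_eq_true_eq]
  constructor
  · rintro ⟨_, ⟨t, ht, rfl⟩, rfl⟩
    exact ⟨t, ⟨mem_treesOfHeightLT_of_arity_le t n ht.le, ht⟩, rfl⟩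
  · rintro ⟨t, ⟨-, ht⟩, rfl⟩
    exact ⟨_, ⟨t, ht, rfl⟩, rfl⟩

theorem card_S (n : ℕ) : Nat.card (S n) = (normalForms n).card := by
  rw [S, ← Set.coe_ofPred, Nat.card_coe_set_eq,
    ← Set.ncard_image_of_injective _ normalizeQ_injective, normalizeQ_image_S,
    Set.ncard_coe_finset]

end AssocType2

/-- `|S 1| = 1`, `|S 2| = 2`, `|S 3| = 8`, `|S 4| = 39`. -/
theorem stmt9 :
    Nat.card (S 1) = 1 ∧ Nat.card (S 2) = 2 ∧ Nat.card (S 3) = 8 ∧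
      Nat.card (S 4) = 39 := by
  simp only [AssocType2.card_S]
  decide
end

section
/- Let f(t) be the formal power series over ℚ with f(0) = 0 satisfying f − 2f² + f⁴ = t. Then the coefficients of f are: [t¹]f = 1, [t²]f = 2, [t³]f = 8, [t⁴]f = 39, [t⁵]f = 212, [t⁶]f = 1232. -/
/-!
Since `g(x) = x - 2x² + x⁴` satisfies
`g(a) - g(b) = (a - b)·(1 - 2(a + b) + (a + b)(a² + b²))` and the second factor is a unit
when `a` and `b` have no constant term, `g(a) ≡ g(b) mod Xⁿ` forces `a ≡ b mod Xⁿ`.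
So it suffices to check that `p = X + 2X² + 8X³ + 39X⁴ + 212X⁵ + 1232X⁶`
satisfies `g(p) ≡ X mod X⁷`.
-/

open PowerSeries

namespace PowerSeries

theorem X_pow_dvd_sub_of_dvd_sub_two_mul_sq_add_pow_four {R : Type*} [CommRing R] {n : ℕ}
    {a b : R⟦X⟧} (ha : constantCoeff a = 0) (hb : constantCoeff b = 0)
    (h : X ^ n ∣ (a - 2 * a ^ 2 + a ^ 4) - (b - 2 * b ^ 2 + b ^ 4)) :
    X ^ n ∣ a - b := by
  have hunit : IsUnit (1 - 2 * (a + b) + (a + b) * (a ^ 2 + b ^ 2)) := by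
    rw [isUnit_iff_constantCoeff]
    simp [ha, hb]
  rw [show (a - 2 * a ^ 2 + a ^ 4) - (b - 2 * b ^ 2 + b ^ 4) =
      (a - b) * (1 - 2 * (a + b) + (a + b) * (a ^ 2 + b ^ 2)) by ring] at h
  exact hunit.dvd_mul_right.mp h

end PowerSeries

/-- the unique power series `f` over `ℚ` with `f(0) = 0` and
`f - 2f² + f⁴ = t` has coefficients `1, 2, 8, 39, 212, 1232` in degrees
`1,...,6`. -/
theorem stmt13 (f : PowerSeries ℚ)
    (hf0 : PowerSeries.constantCoeff f = 0)
    (hf : f - 2 * f ^ 2 + f ^ 4 = PowerSeries.X) :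
    PowerSeries.coeff 1 f = 1 ∧ PowerSeries.coeff 2 f = 2 ∧
    PowerSeries.coeff 3 f = 8 ∧ PowerSeries.coeff 4 f = 39 ∧
    PowerSeries.coeff 5 f = 212 ∧ PowerSeries.coeff 6 f = 1232 := by
  set p : ℚ⟦X⟧ := X + 2 * X ^ 2 + 8 * X ^ 3 + 39 * X ^ 4 + 212 * X ^ 5 + 1232 * X ^ 6
  have hp : X ^ 7 ∣ (p - 2 * p ^ 2 + p ^ 4) - X := by
    rw [X_pow_dvd_iff]
    intro m hm
    simp only [p]
    -- after expansion only monomials of degree at least 7 remain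
    ring_nf
    interval_cases m <;> simp [coeff_X_pow_mul']
  have hfp : X ^ 7 ∣ f - p :=
    X_pow_dvd_sub_of_dvd_sub_two_mul_sq_add_pow_four hf0 (by simp [p])
      (by rwa [hf, dvd_sub_comm])
  have hcoeff (k : ℕ) (hk : k < 7) : coeff k f = coeff k p :=
    sub_eq_zero.mp (by simpa using X_pow_dvd_iff.mp hfp k hk)
  refine ⟨?_, ?_, ?_, ?_, ?_, ?_⟩ <;> rw [hcoeff _ (by norm_num)] <;>
    simp [p, coeff_X, coeff_X_pow, ← map_ofNat C]
end
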